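/- Define h := c_{2m+1}† ∘ c_{2m} ∘ c_{2m-1}† and d₁ := c_{2m-1} ∘ c_{2m}† ∘ c_{2m+1} on the exterior algebra Λ[c₁†,…,c_{2m+1}†]. Then id + d₁h + hd₁ equals the projection onto the subspace ⟨1, c_{2m-1}†, c_{2m+1}†, c_{2m-1}†c_{2m}†, c_{2m}†c_{2m+1}†, c_{2m-1}†c_{2m}†c_{2m+1}†⟩·Λ[c₁†,…,c_{2m-2}†] along the complement ⟨c_{2m}†, c_{2m-1}†c_{2m+1}†⟩·Λ[c₁†,…,c_{2m-2}†]. -/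
import Mathlib


/-- The fermionic Fock space on `n` sites: the exterior algebra `Λ[c₁†,…,c_n†]`,
realized as functions on occupation configurations. -/
abbrev FockSpace (n : ℕ) := (Fin n → Bool) → ℚ

/-- The Jordan–Wigner sign `(-1)^{#{j < i : s j occupied}}`. -/
noncomputable def jwSign {n : ℕ} (s : Fin n → Bool) (i : Fin n) : ℚ :=
  (-1 : ℚ) ^ (Finset.univ.filter (fun j : Fin n => j < i ∧ s j = true)).card

/-- The creation operator `c_i†` (left multiplication by `c_i†`). -/
noncomputable def cr {n : ℕ} (i : Fin n) : FockSpace n →ₗ[ℚ] FockSpace n where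
  toFun f s := if s i = true then jwSign s i * f (Function.update s i false) else 0
  map_add' f g := by
    funext s; by_cases h : s i = true <;> simp [h, mul_add]
  map_smul' a f := by
    funext s; by_cases h : s i = true <;> simp [h] <;> ring

/-- The annihilation operator `c_i` (the odd derivation dual to `c_i†`),
satisfying `{c_i, c_j†} = δ_{ij}`. -/
noncomputable def an {n : ℕ} (i : Fin n) : FockSpace n →ₗ[ℚ] FockSpace n where
  toFun f s := if s i = false then jwSign s i * f (Function.update s i true) else 0
  map_add' f g := by
    funext s; by_cases h : s i = false <;> simp [h, mul_add]
  map_smul' a f := by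
    funext s; by_cases h : s i = false <;> simp [h] <;> ring

/-- The subspace of the Fock space consisting of states supported on occupation
configurations avoiding the "forbidden" configurations. -/
def patternSub (n : ℕ) (allowed : (Fin n → Bool) → Prop) : Submodule ℚ (FockSpace n) where
  carrier := {f | ∀ s, ¬ allowed s → f s = 0}
  add_mem' := by
    intro f g hf hg s hs
    simp [Pi.add_apply, hf s hs, hg s hs]
  zero_mem' := by intro s _; rfl
  smul_mem' := by
    intro a f hf s hs
    simp [Pi.smul_apply, hf s hs]

lemma jwSign_update {n : ℕ} (u : Fin n → Bool) (i x : Fin n) (hx : ¬ (x:ℕ) < (i:ℕ)) (v : Bool) :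
    jwSign (Function.update u x v) i = jwSign u i := by
  unfold jwSign
  congr 1
  apply congrArg
  apply Finset.filter_congr
  intro j _
  by_cases hjx : j = x
  · subst hjx
    simp [Fin.lt_def, hx]
  · simp [Function.update_of_ne hjx]

lemma jwSign_succ {n : ℕ} (u : Fin n → Bool) (i k : Fin n) (hik : (i:ℕ) = (k:ℕ) + 1) :
    jwSign u i = (if u k = true then -1 else 1) * jwSign u k := by
  unfold jwSign
  by_cases hk : u k = true
  · have he : (Finset.univ.filter (fun j : Fin n => j < i ∧ u j = true))
        = insert k (Finset.univ.filter (fun j : Fin n => j < k ∧ u j = true)) := by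
      ext j
      simp only [Finset.mem_filter, Finset.mem_insert, Finset.mem_univ, true_and, Fin.lt_def]
      constructor
      · rintro ⟨h1, h2⟩
        rcases Nat.lt_or_ge (j:ℕ) (k:ℕ) with h | h
        · exact Or.inr ⟨h, h2⟩
        · exact Or.inl (Fin.ext (by omega))
      · rintro (rfl | ⟨h1, h2⟩)
        · exact ⟨by omega, hk⟩
        · exact ⟨by omega, h2⟩
    rw [he, Finset.card_insert_of_notMem (by simp), hk]
    rw [pow_succ]
    norm_num
  · have he : (Finset.univ.filter (fun j : Fin n => j < i ∧ u j = true))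
        = (Finset.univ.filter (fun j : Fin n => j < k ∧ u j = true)) := by
      ext j
      simp only [Finset.mem_filter, Finset.mem_univ, true_and, Fin.lt_def]
      constructor
      · rintro ⟨h1, h2⟩
        refine ⟨?_, h2⟩
        have : (j:ℕ) ≠ (k:ℕ) := by
          intro h
          exact hk ((Fin.ext h : j = k) ▸ h2)
        omega
      · rintro ⟨h1, h2⟩
        exact ⟨by omega, h2⟩
    rw [he]
    simp [hk]

lemma jwSign_pm {n : ℕ} (u : Fin n → Bool) (i : Fin n) : jwSign u i = 1 ∨ jwSign u i = -1 := by
  unfold jwSign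
  exact neg_one_pow_eq_or ℚ _

lemma an_apply {n : ℕ} (i : Fin n) (f : FockSpace n) (s : Fin n → Bool) :
    an i f s = if s i = false then jwSign s i * f (Function.update s i true) else 0 := rfl

lemma cr_apply {n : ℕ} (i : Fin n) (f : FockSpace n) (s : Fin n → Bool) :
    cr i f s = if s i = true then jwSign s i * f (Function.update s i false) else 0 := rfl

lemma key {n : ℕ} (a b c : Fin n) (hab : (b:ℕ) = (a:ℕ) + 1) (hbc : (c:ℕ) = (b:ℕ) + 1)
    (f : FockSpace n) (s : Fin n → Bool) :
    an a (cr b (an c (cr a (an b (cr c f))))) s + cr a (an b (cr c (an a (cr b (an c f))))) s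
      = if (s a = false ∧ s b = true ∧ s c = false) ∨ (s a = true ∧ s b = false ∧ s c = true)
        then -f s else 0 := by
  have hba : b ≠ a := Fin.ne_of_val_ne (by omega)
  have hab' : a ≠ b := Fin.ne_of_val_ne (by omega)
  have hca : c ≠ a := Fin.ne_of_val_ne (by omega)
  have hac : a ≠ c := Fin.ne_of_val_ne (by omega)
  have hcb : c ≠ b := Fin.ne_of_val_ne (by omega)
  have hbc' : b ≠ c := Fin.ne_of_val_ne (by omega)
  have ra : ∀ (u : Fin n → Bool) (v : Bool), jwSign (Function.update u a v) a = jwSign u a :=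
    fun u v => jwSign_update u a a (lt_irrefl _) v
  have rb : ∀ (u : Fin n → Bool) (v : Bool), jwSign (Function.update u b v) a = jwSign u a :=
    fun u v => jwSign_update u a b (by omega) v
  have rc : ∀ (u : Fin n → Bool) (v : Bool), jwSign (Function.update u c v) a = jwSign u a :=
    fun u v => jwSign_update u a c (by omega) v
  have sb : ∀ (u : Fin n → Bool), jwSign u b = (if u a = true then -1 else 1) * jwSign u a :=
    fun u => jwSign_succ u b a hab
  have sc : ∀ (u : Fin n → Bool), jwSign u c = (if u b = true then -1 else 1) * jwSign u b :=
    fun u => jwSign_succ u c b hbc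
  cases hsa : s a <;> cases hsb : s b <;> cases hsc : s c <;>
    simp only [an_apply, cr_apply, Function.update_self, Function.update_of_ne hba,
      Function.update_of_ne hab', Function.update_of_ne hca, Function.update_of_ne hac,
      Function.update_of_ne hcb, Function.update_of_ne hbc', hsa, hsb, hsc, if_true, if_false,
      Bool.true_eq_false, Bool.false_eq_true, ite_true, ite_false, mul_zero, add_zero, zero_add,
      and_true, and_false, true_and, false_and, or_false, false_or, or_self, if_neg, if_pos]
  case false.true.false =>
    have hs6 : Function.update (Function.update (Function.update (Function.update
        (Function.update (Function.update s a true) b false) c true) a false) b true) c false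
        = s := by
      funext j
      simp only [Function.update_apply]
      by_cases h1 : j = c <;> by_cases h2 : j = b <;> by_cases h3 : j = a <;> simp_all
    rw [hs6]
    simp only [sc, sb, ra, rb, rc, Function.update_self, Function.update_of_ne hba,
      Function.update_of_ne hab', Function.update_of_ne hca, Function.update_of_ne hac,
      Function.update_of_ne hcb, Function.update_of_ne hbc', hsa, hsb, hsc,
      Bool.true_eq_false, Bool.false_eq_true, ite_true, ite_false, if_true, if_false]
    rcases jwSign_pm s a with h | h <;> rw [h] <;> ring
  case true.false.true =>
    have hs6 : Function.update (Function.update (Function.update (Function.update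
        (Function.update (Function.update s a false) b true) c false) a true) b false) c true
        = s := by
      funext j
      simp only [Function.update_apply]
      by_cases h1 : j = c <;> by_cases h2 : j = b <;> by_cases h3 : j = a <;> simp_all
    rw [hs6]
    simp only [sc, sb, ra, rb, rc, Function.update_self, Function.update_of_ne hba,
      Function.update_of_ne hab', Function.update_of_ne hca, Function.update_of_ne hac,
      Function.update_of_ne hcb, Function.update_of_ne hbc', hsa, hsb, hsc,
      Bool.true_eq_false, Bool.false_eq_true, ite_true, ite_false, if_true, if_false]
    rcases jwSign_pm s a with h | h <;> rw [h] <;> ring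

lemma mem_patternSub {n : ℕ} (p : (Fin n → Bool) → Prop) (f : FockSpace n) :
    f ∈ patternSub n p ↔ ∀ s, ¬ p s → f s = 0 := Iff.rfl

def badPat {n : ℕ} (a b c : Fin n) (s : Fin n → Bool) : Prop :=
  (s a = false ∧ s b = true ∧ s c = false) ∨ (s a = true ∧ s b = false ∧ s c = true)

instance {n : ℕ} (a b c : Fin n) (s : Fin n → Bool) : Decidable (badPat a b c s) := by
  unfold badPat; infer_instance

lemma nicolai_aux {n : ℕ} (a b c : Fin n) (hab : (b:ℕ) = (a:ℕ) + 1)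
    (hbc : (c:ℕ) = (b:ℕ) + 1) :
    IsCompl (patternSub n (fun s => ¬ badPat a b c s)) (patternSub n (badPat a b c)) ∧
    (∀ f ∈ patternSub n (fun s => ¬ badPat a b c s),
      ((LinearMap.id + (an a ∘ₗ cr b ∘ₗ an c) ∘ₗ (cr a ∘ₗ an b ∘ₗ cr c)
        + (cr a ∘ₗ an b ∘ₗ cr c) ∘ₗ (an a ∘ₗ cr b ∘ₗ an c) :
          FockSpace n →ₗ[ℚ] FockSpace n)) f = f) ∧
    (∀ f ∈ patternSub n (badPat a b c),
      ((LinearMap.id + (an a ∘ₗ cr b ∘ₗ an c) ∘ₗ (cr a ∘ₗ an b ∘ₗ cr c)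
        + (cr a ∘ₗ an b ∘ₗ cr c) ∘ₗ (an a ∘ₗ cr b ∘ₗ an c) :
          FockSpace n →ₗ[ℚ] FockSpace n)) f = 0) := by
  have hP : ∀ (f : FockSpace n) (s : Fin n → Bool),
      ((LinearMap.id + (an a ∘ₗ cr b ∘ₗ an c) ∘ₗ (cr a ∘ₗ an b ∘ₗ cr c)
        + (cr a ∘ₗ an b ∘ₗ cr c) ∘ₗ (an a ∘ₗ cr b ∘ₗ an c) :
          FockSpace n →ₗ[ℚ] FockSpace n)) f s
      = f s + (if badPat a b c s then -f s else 0) := by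
    intro f s
    have hk := key a b c hab hbc f s
    simp only [LinearMap.add_apply, LinearMap.id_coe, id_eq, LinearMap.comp_apply, Pi.add_apply]
    rw [add_assoc]
    congr 1
  refine ⟨?_, ?_, ?_⟩
  · constructor
    · rw [disjoint_iff]
      ext f
      simp only [Submodule.mem_inf, Submodule.mem_bot, mem_patternSub]
      constructor
      · rintro ⟨h1, h2⟩
        funext s
        by_cases hb : badPat a b c s
        · exact h1 s (not_not_intro hb)
        · exact h2 s hb
      · rintro rfl
        exact ⟨fun s _ => rfl, fun s _ => rfl⟩
    · rw [codisjoint_iff, eq_top_iff]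
      intro f _
      rw [Submodule.mem_sup]
      refine ⟨fun s => if badPat a b c s then 0 else f s,
        (mem_patternSub _ _).2 ?_, fun s => if badPat a b c s then f s else 0,
        (mem_patternSub _ _).2 ?_, ?_⟩
      · intro s hs
        rw [not_not] at hs
        simp [hs]
      · intro s hs
        simp [hs]
      · funext s
        by_cases hb : badPat a b c s <;> simp [hb]
  · intro f hf
    funext s
    rw [hP]
    by_cases hb : badPat a b c s
    · rw [(mem_patternSub _ _).1 hf s (not_not_intro hb), if_pos hb]
      norm_num
    · rw [if_neg hb, add_zero]
  · intro f hf
    funext s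
    rw [hP]
    by_cases hb : badPat a b c s
    · rw [if_pos hb]
      show f s + -f s = (0 : FockSpace n) s
      simp
    · rw [(mem_patternSub _ _).1 hf s hb, if_neg hb]
      show (0:ℚ) + 0 = (0 : FockSpace n) s
      simp

/-- with `h = c_{2m+1}† c_{2m} c_{2m-1}†` and `d₁ = c_{2m-1} c_{2m}† c_{2m+1}`
(0-indexed sites `a = 2m-2`, `b = 2m-1`, `c = 2m`), the operator `id + d₁h + hd₁` is the
(here `d₁` is composed right-to-left and `h` in the written order, the Koszul-sign
convention under which the homotopy identity holds)
projection onto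
`⟨1, c_{2m-1}†, c_{2m+1}†, c_{2m-1}†c_{2m}†, c_{2m}†c_{2m+1}†, c_{2m-1}†c_{2m}†c_{2m+1}†⟩·Λ[c₁†,…,c_{2m-2}†]`
(states whose occupation on sites `(a,b,c)` is not `(0,1,0)` or `(1,0,1)`) along the
complement `⟨c_{2m}†, c_{2m-1}†c_{2m+1}†⟩·Λ[c₁†,…,c_{2m-2}†]`. -/
theorem nicolai_homotopy_projection (m : ℕ) (hm : 1 ≤ m) :
    letI a : Fin (2*m+1) := ⟨2*m-2, by omega⟩
    letI b : Fin (2*m+1) := ⟨2*m-1, by omega⟩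
    letI c : Fin (2*m+1) := ⟨2*m, by omega⟩
    letI h : FockSpace (2*m+1) →ₗ[ℚ] FockSpace (2*m+1) := cr a ∘ₗ an b ∘ₗ cr c
    letI d1 : FockSpace (2*m+1) →ₗ[ℚ] FockSpace (2*m+1) := an a ∘ₗ cr b ∘ₗ an c
    letI P : FockSpace (2*m+1) →ₗ[ℚ] FockSpace (2*m+1) :=
      LinearMap.id + d1 ∘ₗ h + h ∘ₗ d1
    letI bad : (Fin (2*m+1) → Bool) → Prop := fun s =>
      (s a = false ∧ s b = true ∧ s c = false) ∨
      (s a = true ∧ s b = false ∧ s c = true)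
    letI S : Submodule ℚ (FockSpace (2*m+1)) := patternSub (2*m+1) (fun s => ¬ bad s)
    letI T : Submodule ℚ (FockSpace (2*m+1)) := patternSub (2*m+1) bad
    IsCompl S T ∧ (∀ f ∈ S, P f = f) ∧ (∀ f ∈ T, P f = 0) := by
  exact nicolai_aux (n := 2*m+1) ⟨2*m-2, by omega⟩ ⟨2*m-1, by omega⟩ ⟨2*m, by omega⟩
    (by show 2*m-1 = 2*m-2+1; omega) (by show 2*m = 2*m-1+1; omega)
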